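/- arXiv:2310.15034 — 3 statements merged into one kernel-verified Lean document; each statement's English description precedes it below -/
import Mathlib

section
/- Let Φ be a Bernstein function with tail Lévy measure Π̄, and let φ : [0,∞) → ℝ be continuously differentiable with φ and φ′ of exponential order w (|φ(t)|, |φ′(t)| ≤ M e^{wt}). Define the Caputo–Dzherbashian-type derivative 𝔇^Φ φ(t) = ∫₀^t φ′(s) Π̄(t−s) ds. Then for all λ > w, ∫₀^∞ e^{−λt} 𝔇^Φ φ(t) dt = Φ(λ) φ̃(λ) − (Φ(λ)/λ) φ(0), where φ̃ is the Laplace transform of φ. -/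
/-!
The Laplace transform of a one-sided convolution `∫₀^t f(s) g(t-s) ds` is the product of the
transforms (Fubini, i.e. `integral_convolution` for the functions extended by zero to `(-∞, 0]`).
Integration by parts gives `λ φ̃(λ) - φ(0)` for the transform of `φ'`, and the layer-cake formula
applied to `1 - e^{-λz} = ∫₀^z λ e^{-λu} du` gives `Φ(λ)/λ` for the transform of the tail `Π̄`.
-/

open MeasureTheory Set Filter Topology Convolution
open scoped ENNReal

noncomputable def laplaceTransform (f : ℝ → ℝ) (l : ℝ) : ℝ :=
  ∫ t in Ioi 0, Real.exp (-(l * t)) * f t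

theorem indicator_Ioi_mul_indicator_Ioi_sub (f g : ℝ → ℝ) (t s : ℝ) :
    (Ioi 0).indicator f s * (Ioi 0).indicator g (t - s) =
      (Ioo 0 t).indicator (fun s => f s * g (t - s)) s := by
  by_cases hs : 0 < s <;> by_cases hts : s < t <;>
    simp [hs, hts, sub_pos]

theorem convolution_indicator_Ioi_apply (f g : ℝ → ℝ) (t : ℝ) :
    ((Ioi 0).indicator f ⋆[ContinuousLinearMap.lsmul ℝ ℝ] (Ioi 0).indicator g) t =
      (Ioi 0).indicator (fun t => ∫ s in 0..t, f s * g (t - s)) t := by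
  simp only [convolution, ContinuousLinearMap.lsmul_apply, smul_eq_mul,
    indicator_Ioi_mul_indicator_Ioi_sub, integral_indicator measurableSet_Ioo]
  rcases lt_or_ge 0 t with ht | ht
  · rw [indicator_of_mem (mem_Ioi.mpr ht), intervalIntegral.integral_of_le ht.le,
      integral_Ioc_eq_integral_Ioo]
  · rw [indicator_of_notMem (notMem_Ioi.mpr ht), Ioo_eq_empty (not_lt.mpr ht),
      Measure.restrict_empty, integral_zero_measure]

theorem integral_Ioi_intervalIntegral_mul_sub {f g : ℝ → ℝ}
    (hf : IntegrableOn f (Ioi 0)) (hg : IntegrableOn g (Ioi 0)) :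
    ∫ t in Ioi 0, ∫ s in 0..t, f s * g (t - s) = (∫ t in Ioi 0, f t) * ∫ t in Ioi 0, g t := by
  have := integral_convolution (ContinuousLinearMap.lsmul ℝ ℝ)
    ((integrable_indicator_iff measurableSet_Ioi).mpr hf)
    ((integrable_indicator_iff measurableSet_Ioi).mpr hg)
  simp only [convolution_indicator_Ioi_apply, integral_indicator measurableSet_Ioi,
    ContinuousLinearMap.lsmul_apply, smul_eq_mul] at this
  exact this

theorem laplaceTransform_intervalIntegral_mul_sub {f g : ℝ → ℝ} {l : ℝ}
    (hf : IntegrableOn (fun t => Real.exp (-(l * t)) * f t) (Ioi 0))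
    (hg : IntegrableOn (fun t => Real.exp (-(l * t)) * g t) (Ioi 0)) :
    laplaceTransform (fun t => ∫ s in 0..t, f s * g (t - s)) l =
      laplaceTransform f l * laplaceTransform g l := by
  rw [laplaceTransform, laplaceTransform, laplaceTransform,
    ← integral_Ioi_intervalIntegral_mul_sub hf hg]
  congr 1 with t
  rw [← intervalIntegral.integral_const_mul]
  congr 1 with s
  have hexp : Real.exp (-(l * t)) = Real.exp (-(l * s)) * Real.exp (-(l * (t - s))) := by
    rw [← Real.exp_add]; ring_nf
  rw [hexp]; ring

theorem hasDerivAt_exp_neg_mul (l x : ℝ) :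
    HasDerivAt (fun t => Real.exp (-(l * t))) (-l * Real.exp (-(l * x))) x := by
  simpa [mul_comm] using ((hasDerivAt_id x).const_mul l).neg.exp

theorem abs_exp_neg_mul_mul_le {g : ℝ → ℝ} {M w l t : ℝ} (hg : |g t| ≤ M * Real.exp (w * t)) :
    |Real.exp (-(l * t)) * g t| ≤ M * Real.exp (-(l - w) * t) :=
  calc |Real.exp (-(l * t)) * g t| ≤ Real.exp (-(l * t)) * (M * Real.exp (w * t)) := by
        rw [abs_mul, Real.abs_exp]; gcongr
    _ = M * Real.exp (-(l - w) * t) := by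
        rw [mul_left_comm, ← Real.exp_add]; ring_nf

theorem integrableOn_exp_neg_mul_of_abs_le {g : ℝ → ℝ} {M w l : ℝ}
    (hg : AEStronglyMeasurable g (volume.restrict (Ioi 0)))
    (hbd : ∀ t ≥ (0:ℝ), |g t| ≤ M * Real.exp (w * t)) (hl : w < l) :
    IntegrableOn (fun t => Real.exp (-(l * t)) * g t) (Ioi 0) := by
  refine ((exp_neg_integrableOn_Ioi 0 (sub_pos.mpr hl)).const_mul M).mono'
    ((by fun_prop : Continuous fun t => Real.exp (-(l * t))).aestronglyMeasurable.mul hg) ?_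
  filter_upwards [ae_restrict_mem measurableSet_Ioi] with t (ht : 0 < t)
  exact abs_exp_neg_mul_mul_le (hbd t ht.le)

theorem tendsto_exp_neg_mul_mul_of_abs_le {g : ℝ → ℝ} {M w l : ℝ}
    (hbd : ∀ t ≥ (0:ℝ), |g t| ≤ M * Real.exp (w * t)) (hl : w < l) :
    Tendsto (fun t => Real.exp (-(l * t)) * g t) atTop (𝓝 0) := by
  have hdecay : Tendsto (fun t => M * Real.exp (-(l - w) * t)) atTop (𝓝 0) := by
    simpa using (Real.tendsto_exp_atBot.comp
      (tendsto_id.const_mul_atTop_of_neg (neg_lt_zero.mpr (sub_pos.mpr hl)))).const_mul M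
  refine squeeze_zero_norm' ?_ hdecay
  filter_upwards [eventually_ge_atTop 0] with t ht
  exact abs_exp_neg_mul_mul_le (hbd t ht)

theorem laplaceTransform_deriv {φ : ℝ → ℝ} {M w l : ℝ} (hφ : Differentiable ℝ φ)
    (hφbd : ∀ t ≥ (0:ℝ), |φ t| ≤ M * Real.exp (w * t))
    (hφ'bd : ∀ t ≥ (0:ℝ), |deriv φ t| ≤ M * Real.exp (w * t)) (hl : w < l) :
    laplaceTransform (deriv φ) l = l * laplaceTransform φ l - φ 0 := by
  have hφ'int := integrableOn_exp_neg_mul_of_abs_le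
    (measurable_deriv φ).aestronglyMeasurable.restrict hφ'bd hl
  have hφint := integrableOn_exp_neg_mul_of_abs_le
    hφ.continuous.aestronglyMeasurable.restrict hφbd hl
  have hderiv : ∀ x ∈ Ici (0:ℝ), HasDerivAt (fun t => Real.exp (-(l * t)) * φ t)
      (Real.exp (-(l * x)) * deriv φ x - l * (Real.exp (-(l * x)) * φ x)) x := fun x _ =>
    ((hasDerivAt_exp_neg_mul l x).mul (hφ x).hasDerivAt).congr_deriv (by ring)
  have hftc := integral_Ioi_of_hasDerivAt_of_tendsto' hderiv (hφ'int.sub (hφint.const_mul l))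
    (tendsto_exp_neg_mul_mul_of_abs_le hφbd hl)
  rw [integral_sub hφ'int (hφint.const_mul l), integral_const_mul] at hftc
  simp only [mul_zero, neg_zero, Real.exp_zero, one_mul, zero_sub] at hftc
  rw [laplaceTransform, laplaceTransform]
  linarith

theorem measurable_measure_Ioi (ν : Measure ℝ) : Measurable fun u => ν (Ioi u) :=
  Antitone.measurable fun _ _ h => measure_mono (Ioi_subset_Ioi h)

theorem measure_Ioi_lt_top_of_integrableOn_min {ν : Measure ℝ}
    (hν : IntegrableOn (fun z => min 1 z) (Ioi 0) ν) {u : ℝ} (hu : 0 < u) :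
    ν (Ioi u) < ∞ := by
  have := hν.measure_norm_ge_lt_top (ε := min 1 u) (lt_min one_pos hu)
  rw [Measure.restrict_apply' measurableSet_Ioi] at this
  refine lt_of_le_of_lt (measure_mono fun z (hz : u < z) => ?_) this
  refine ⟨?_, hu.trans hz⟩
  simp only [mem_ofPred_eq, Real.norm_eq_abs]
  rw [abs_of_pos (lt_min one_pos (hu.trans hz))]
  exact min_le_min le_rfl hz.le

theorem one_sub_exp_neg_mul_le {l z : ℝ} (hl : 0 ≤ l) (hz : 0 ≤ z) :
    1 - Real.exp (-(l * z)) ≤ (1 + l) * min 1 z := by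
  have h1 := Real.exp_pos (-(l * z))
  have h2 := Real.add_one_le_exp (-(l * z))
  rcases le_total 1 z with h | h
  · rw [min_eq_left h]; nlinarith
  · rw [min_eq_right h]; nlinarith

theorem integrableOn_one_sub_exp_neg_mul {ν : Measure ℝ}
    (hν : IntegrableOn (fun z => min 1 z) (Ioi 0) ν) {l : ℝ} (hl : 0 ≤ l) :
    IntegrableOn (fun z => 1 - Real.exp (-(l * z))) (Ioi 0) ν := by
  refine (hν.const_mul (1 + l)).mono' (by fun_prop) ?_
  filter_upwards [ae_restrict_mem measurableSet_Ioi] with z (hz : 0 < z)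
  have : Real.exp (-(l * z)) ≤ 1 := Real.exp_le_one_iff.mpr (by nlinarith)
  rw [Real.norm_eq_abs, abs_of_nonneg (by linarith)]
  exact one_sub_exp_neg_mul_le hl hz.le

theorem integral_mul_exp_neg_mul (l z : ℝ) :
    ∫ t in (0:ℝ)..z, l * Real.exp (-(l * t)) = 1 - Real.exp (-(l * z)) := by
  rw [intervalIntegral.integral_eq_sub_of_hasDerivAt
    (f := fun t => -Real.exp (-(l * t)))
    (fun x _ => by simpa using (hasDerivAt_exp_neg_mul l x).fun_neg)
    ((by fun_prop : Continuous fun t => l * Real.exp (-(l * t))).intervalIntegrable _ _)]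
  simp; ring

theorem lintegral_one_sub_exp_neg_mul (ν : Measure ℝ) {l : ℝ} (hl : 0 ≤ l) :
    ∫⁻ z in Ioi 0, ENNReal.ofReal (1 - Real.exp (-(l * z))) ∂ν =
      ∫⁻ u in Ioi 0, ν (Ioi u) * ENNReal.ofReal (l * Real.exp (-(l * u))) := by
  have hlayer := lintegral_comp_eq_lintegral_meas_lt_mul (ν.restrict (Ioi 0)) (f := id)
    (g := fun t => l * Real.exp (-(l * t)))
    ((ae_restrict_mem measurableSet_Ioi).mono fun z hz => le_of_lt hz) aemeasurable_id
    (fun _ _ => (by fun_prop : Continuous fun t => l * Real.exp (-(l * t))).intervalIntegrable _ _)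
    (ae_of_all _ fun t => by positivity)
  simp only [id, integral_mul_exp_neg_mul] at hlayer
  rw [hlayer]
  refine setLIntegral_congr_fun measurableSet_Ioi fun u hu => ?_
  rw [Measure.restrict_apply' measurableSet_Ioi]
  change ν (Ioi u ∩ Ioi 0) * _ = _
  rw [inter_eq_left.mpr (Ioi_subset_Ioi (le_of_lt hu))]

theorem toReal_measure_Ioi_mul_ofReal (ν : Measure ℝ) {l : ℝ} (hl : 0 ≤ l) (u : ℝ) :
    (ν (Ioi u) * ENNReal.ofReal (l * Real.exp (-(l * u)))).toReal =
      l * (Real.exp (-(l * u)) * (ν (Ioi u)).toReal) := by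
  rw [ENNReal.toReal_mul, ENNReal.toReal_ofReal (by positivity)]
  ring

theorem measurable_measure_Ioi_mul_ofReal (ν : Measure ℝ) (l : ℝ) :
    Measurable fun u => ν (Ioi u) * ENNReal.ofReal (l * Real.exp (-(l * u))) :=
  (measurable_measure_Ioi ν).mul (by fun_prop)

theorem mul_laplaceTransform_measure_Ioi {ν : Measure ℝ}
    (hν : IntegrableOn (fun z => min 1 z) (Ioi 0) ν) {l : ℝ} (hl : 0 ≤ l) :
    l * laplaceTransform (fun u => (ν (Ioi u)).toReal) l =
      ∫ z in Ioi 0, (1 - Real.exp (-(l * z))) ∂ν := by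
  have hfin : ∀ᵐ u ∂volume.restrict (Ioi 0),
      ν (Ioi u) * ENNReal.ofReal (l * Real.exp (-(l * u))) < ∞ := by
    filter_upwards [ae_restrict_mem measurableSet_Ioi] with u hu
    exact ENNReal.mul_lt_top (measure_Ioi_lt_top_of_integrableOn_min hν hu) ENNReal.ofReal_lt_top
  rw [laplaceTransform, ← integral_const_mul]
  simp_rw [← toReal_measure_Ioi_mul_ofReal ν hl]
  -- both sides are `toReal` of the two sides of the layer-cake identity
  rw [integral_toReal (measurable_measure_Ioi_mul_ofReal ν l).aemeasurable hfin,
    ← lintegral_one_sub_exp_neg_mul ν hl, integral_eq_lintegral_of_nonneg_ae _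
      (by fun_prop : Continuous fun z => 1 - Real.exp (-(l * z))).aestronglyMeasurable]
  filter_upwards [ae_restrict_mem measurableSet_Ioi] with z (hz : 0 < z)
  have : Real.exp (-(l * z)) ≤ 1 := Real.exp_le_one_iff.mpr (by nlinarith)
  simpa using this

theorem integrableOn_exp_neg_mul_measure_Ioi {ν : Measure ℝ}
    (hν : IntegrableOn (fun z => min 1 z) (Ioi 0) ν) {l : ℝ} (hl : 0 < l) :
    IntegrableOn (fun u => Real.exp (-(l * u)) * (ν (Ioi u)).toReal) (Ioi 0) := by
  rw [IntegrableOn, ← integrable_const_mul_iff (isUnit_iff_ne_zero.mpr hl.ne')]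
  simp_rw [← toReal_measure_Ioi_mul_ofReal ν hl.le]
  refine integrable_toReal_of_lintegral_ne_top
    (measurable_measure_Ioi_mul_ofReal ν l).aemeasurable ?_
  rw [← lintegral_one_sub_exp_neg_mul ν hl.le]
  exact ((integrableOn_one_sub_exp_neg_mul hν hl.le).lintegral_lt_top).ne

theorem laplace_caputo_dzherbashian_general
    (Lev : Measure ℝ)
    (hLev : IntegrableOn (fun z => min 1 z) (Ioi 0) Lev)
    (Φ : ℝ → ℝ)
    (hΦ : ∀ l > (0:ℝ), Φ l = ∫ z in Ioi (0:ℝ), (1 - Real.exp (-(l * z))) ∂Lev)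
    (φ : ℝ → ℝ) (M w : ℝ) (hw : 0 ≤ w)
    (hφdiff : Differentiable ℝ φ)
    (hφbd : ∀ t ≥ (0:ℝ), |φ t| ≤ M * Real.exp (w * t))
    (hφ'bd : ∀ t ≥ (0:ℝ), |deriv φ t| ≤ M * Real.exp (w * t))
    (l : ℝ) (hl : w < l) :
    ∫ t in Ioi (0:ℝ), Real.exp (-(l * t)) *
        (∫ s in (0:ℝ)..t, deriv φ s * (Lev (Ioi (t - s))).toReal) =
      Φ l * (∫ t in Ioi (0:ℝ), Real.exp (-(l * t)) * φ t) - (Φ l / l) * φ 0 := by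
  have hl0 : 0 < l := hw.trans_lt hl
  have htail : laplaceTransform (fun u => (Lev (Ioi u)).toReal) l = Φ l / l := by
    rw [hΦ l hl0, ← mul_laplaceTransform_measure_Ioi hLev hl0.le, mul_div_cancel_left₀ _ hl0.ne']
  calc _ = laplaceTransform (deriv φ) l * laplaceTransform (fun u => (Lev (Ioi u)).toReal) l :=
        laplaceTransform_intervalIntegral_mul_sub
          (integrableOn_exp_neg_mul_of_abs_le
            (measurable_deriv φ).aestronglyMeasurable.restrict hφ'bd hl)
          (integrableOn_exp_neg_mul_measure_Ioi hLev hl0)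
    _ = (l * laplaceTransform φ l - φ 0) * (Φ l / l) := by
        rw [laplaceTransform_deriv hφdiff hφbd hφ'bd hl, htail]
    _ = _ := by
        rw [laplaceTransform]
        field_simp

/-- Laplace transform of the Caputo–Dzherbashian-type derivative:
`∫₀^∞ e^{−λt} 𝔇^Φ φ(t) dt = Φ(λ) φ̃(λ) − (Φ(λ)/λ) φ(0)` for `λ > w`. -/
theorem laplace_caputo_dzherbashian
    (Lev : Measure ℝ)
    (hLev : IntegrableOn (fun z => min 1 z) (Ioi 0) Lev)
    (Φ : ℝ → ℝ)
    (hΦ : ∀ l > (0:ℝ), Φ l = ∫ z in Ioi (0:ℝ), (1 - Real.exp (-(l * z))) ∂Lev)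
    (φ : ℝ → ℝ) (M w : ℝ) (hw : 0 ≤ w) (hM : 0 < M)
    (hφdiff : Differentiable ℝ φ)
    (hφbd : ∀ t ≥ (0:ℝ), |φ t| ≤ M * Real.exp (w * t))
    (hφ'bd : ∀ t ≥ (0:ℝ), |deriv φ t| ≤ M * Real.exp (w * t))
    (l : ℝ) (hl : w < l) :
    ∫ t in Ioi (0:ℝ), Real.exp (-(l * t)) *
        (∫ s in (0:ℝ)..t, deriv φ s * (Lev (Ioi (t - s))).toReal) =
      Φ l * (∫ t in Ioi (0:ℝ), Real.exp (-(l * t)) * φ t) - (Φ l / l) * φ 0 :=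
  laplace_caputo_dzherbashian_general Lev hLev Φ hΦ φ M w hw hφdiff hφbd hφ'bd l hl
end

section
/- Let Φ be a Bernstein function with Lévy measure Π (no drift, no killing), and let f ∈ 𝒮(ℝ). Then the Fourier transform of the left Marchaud-type derivative D₋^Φ f(x) = ∫₀^∞ (f(x) − f(x−y)) Π(dy) equals Φ(iξ) f̂(ξ), and the Fourier transform of the right Marchaud-type derivative D₊^Φ f(x) = ∫₀^∞ (f(x) − f(x+y)) Π(dy) equals Φ(−iξ) f̂(ξ), where Φ is extended to the complex half-plane Re(z) ≥ 0 by Φ(z) = ∫₀^∞ (1 − e^{−zy}) Π(dy). -/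
/-!
Multiply the Marchaud integrand by the Fourier kernel and exchange the two integrals. For a
fixed jump `y`, translation invariance of Lebesgue measure gives
`∫ e^{-iξx} (f x - f (x - y)) dx = (1 - e^{-iξy}) f̂(ξ)`, and integrating this in `y` against `Π`
produces `Φ(iξ) f̂(ξ)`. Fubini applies because `‖f - f(· - y)‖₁ ≤ K min(1, |y|)` (mean value
theorem for small `y`, triangle inequality for large `y`) and `min(1, y)` is `Π`-integrable,
which also makes `Π` σ-finite on `(0, ∞)`. The right derivative is the same computation with
the jump `-y`.
-/

open MeasureTheory Set

theorem MeasureTheory.Integrable.sigmaFinite_of_ae_pos {α : Type*} [MeasurableSpace α]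
    {μ : Measure α} {g : α → ℝ} (hg : Integrable g μ) (hpos : ∀ᵐ x ∂μ, 0 < g x) :
    SigmaFinite μ := by
  refine Measure.sigmaFinite_of_countable
    (S := insert {x | g x ≤ 0} (range fun n : ℕ => {x | 1 / (n + 1 : ℝ) ≤ g x}))
    ((countable_range _).insert _) ?_ ?_
  · rintro s (rfl | ⟨n, rfl⟩)
    · exact (show μ {x | g x ≤ 0} = 0 by simpa [ae_iff] using hpos).trans_lt
        ENNReal.zero_lt_top
    · exact hg.measure_ge_lt_top Nat.one_div_pos_of_nat
  · refine eq_univ_of_forall fun x => ?_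
    rcases le_or_gt (g x) 0 with hx | hx
    · exact mem_sUnion_of_mem hx (mem_insert _ _)
    · obtain ⟨n, hn⟩ := exists_nat_one_div_lt hx
      exact mem_sUnion_of_mem hn.le (mem_insert_of_mem _ ⟨n, rfl⟩)

namespace SchwartzMap

variable {E : Type*} [NormedAddCommGroup E] [NormedSpace ℝ E] (f : 𝓢(ℝ, E))

theorem exists_norm_deriv_le :
    ∃ C, 0 < C ∧ ∀ x : ℝ, ‖deriv f x‖ ≤ C / (1 + x ^ 2) := by
  obtain ⟨C₀, hC₀, h₀⟩ := (derivCLM ℝ E f).decay 0 0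
  obtain ⟨C₂, hC₂, h₂⟩ := (derivCLM ℝ E f).decay 2 0
  refine ⟨C₀ + C₂, by positivity, fun x => ?_⟩
  have h₀x := h₀ x
  have h₂x := h₂ x
  simp only [norm_iteratedFDeriv_zero, derivCLM_apply, pow_zero, one_mul,
    Real.norm_eq_abs, sq_abs] at h₀x h₂x
  rw [le_div_iff₀ (by positivity)]
  nlinarith [norm_nonneg (deriv f x), sq_nonneg x]

theorem exists_norm_sub_comp_sub_le :
    ∃ C, 0 < C ∧
      ∀ x c : ℝ, |c| ≤ 1 → ‖f x - f (x - c)‖ ≤ C * |c| * (1 + x ^ 2)⁻¹ := by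
  obtain ⟨C, hC, hderiv⟩ := f.exists_norm_deriv_le
  refine ⟨3 * C, by positivity, fun x c hc => ?_⟩
  -- on `[x - 1, x + 1]` the weight `(1 + t ^ 2)⁻¹` is at most three times its value at `x`
  have hball : ∀ t ∈ Metric.closedBall x 1, ‖deriv f t‖ ≤ 3 * C * (1 + x ^ 2)⁻¹ := by
    intro t ht
    rw [Metric.mem_closedBall, Real.dist_eq, abs_le] at ht
    refine (hderiv t).trans ?_
    have hdist : (t - x) ^ 2 ≤ 1 := by nlinarith
    have hx : x ^ 2 ≤ 2 + 2 * t ^ 2 := by nlinarith [sq_nonneg (x - 2 * t)]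
    rw [← div_eq_mul_inv, div_le_div_iff₀ (by positivity) (by positivity)]
    nlinarith
  have := (convex_closedBall x 1).norm_image_sub_le_of_norm_deriv_le
    (fun t _ => f.differentiableAt) hball (x := x - c) (y := x)
    (by simpa [Real.dist_eq] using hc) (Metric.mem_closedBall_self zero_le_one)
  simpa [Real.dist_eq, mul_comm, mul_left_comm, mul_assoc] using this

theorem exists_integral_norm_sub_comp_sub_le :
    ∃ K, ∀ c : ℝ, ∫ x, ‖f x - f (x - c)‖ ≤ K * min 1 |c| := by
  obtain ⟨C, hC, hsmall⟩ := f.exists_norm_sub_comp_sub_le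
  have hI : 0 ≤ ∫ x : ℝ, (1 + x ^ 2)⁻¹ := integral_nonneg fun x => by positivity
  have hN : 0 ≤ ∫ x, ‖f x‖ := integral_nonneg fun x => norm_nonneg _
  refine ⟨C * (∫ x : ℝ, (1 + x ^ 2)⁻¹) + 2 * ∫ x, ‖f x‖, fun c => ?_⟩
  rcases le_or_gt |c| 1 with hc | hc
  · calc ∫ x, ‖f x - f (x - c)‖
        ≤ ∫ x, C * |c| * (1 + x ^ 2)⁻¹ :=
          integral_mono_of_nonneg (.of_forall fun x => norm_nonneg _)
            (integrable_inv_one_add_sq.const_mul _) (.of_forall fun x => hsmall x c hc)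
      _ = C * |c| * ∫ x : ℝ, (1 + x ^ 2)⁻¹ := integral_const_mul _ _
      _ ≤ _ := by
          rw [min_eq_right hc, add_mul, mul_right_comm]
          exact le_add_of_nonneg_right
            (mul_nonneg (mul_nonneg zero_le_two hN) (abs_nonneg c))
  · have hshift := (f.integrable (μ := volume)).norm.comp_sub_right c
    calc ∫ x, ‖f x - f (x - c)‖
        ≤ ∫ x, (‖f x‖ + ‖f (x - c)‖) :=
          integral_mono_of_nonneg (.of_forall fun x => norm_nonneg _)
            (f.integrable.norm.add hshift) (.of_forall fun x => norm_sub_le _ _)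
      _ = 2 * ∫ x, ‖f x‖ := by
          rw [integral_add f.integrable.norm hshift,
            integral_sub_right_eq_self (fun x => ‖f x‖) c, two_mul]
      _ ≤ _ := by rw [min_eq_left hc.le]; nlinarith

end SchwartzMap

section Fourier

open Complex
open scoped SchwartzMap

variable {E : Type*} [NormedAddCommGroup E] [NormedSpace ℂ E]

theorem MeasureTheory.Integrable.cexp_smul {g : ℝ → E} (hg : Integrable g) (ξ : ℝ) :
    Integrable fun x : ℝ => cexp (-(I * ξ * x)) • g x :=
  hg.bdd_smul 1
    (show Continuous fun x : ℝ => cexp (-(I * ξ * x)) by fun_prop).aestronglyMeasurable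
    (.of_forall fun x => by simp [norm_exp])

theorem integral_cexp_smul_comp_sub (g : ℝ → E) (ξ c : ℝ) :
    ∫ x : ℝ, cexp (-(I * ξ * x)) • g (x - c) =
      cexp (-(I * ξ * c)) • ∫ x : ℝ, cexp (-(I * ξ * x)) • g x := by
  have hshift : ∀ x : ℝ, cexp (-(I * ξ * x)) • g (x - c) =
      cexp (-(I * ξ * c)) • (cexp (-(I * ξ * ↑(x - c))) • g (x - c)) := fun x => by
    rw [smul_smul, ← Complex.exp_add]
    push_cast
    ring_nf
  simp_rw [hshift]
  rw [integral_smul, integral_sub_right_eq_self (fun u : ℝ => cexp (-(I * ξ * u)) • g u) c]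

theorem SchwartzMap.integral_cexp_smul_sub_comp_sub [CompleteSpace E] (f : 𝓢(ℝ, E))
    (ξ c : ℝ) :
    ∫ x : ℝ, cexp (-(I * ξ * x)) • (f x - f (x - c)) =
      (1 - cexp (-(I * ξ * c))) • ∫ x : ℝ, cexp (-(I * ξ * x)) • f x := by
  simp_rw [smul_sub]
  rw [integral_sub (f.integrable.cexp_smul ξ) ((f.integrable.comp_sub_right c).cexp_smul ξ),
    integral_cexp_smul_comp_sub, sub_smul, one_smul]

theorem SchwartzMap.integral_cexp_smul_integral_sub_comp_sub [CompleteSpace E] {α : Type*}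
    [MeasurableSpace α] {μ : Measure α} [SigmaFinite μ] {s : α → ℝ} (hs : Measurable s)
    (hμs : Integrable (fun y => min 1 |s y|) μ) (f : 𝓢(ℝ, E)) (ξ : ℝ) :
    ∫ x : ℝ, cexp (-(I * ξ * x)) • ∫ y, (f x - f (x - s y)) ∂μ =
      (∫ y, (1 - cexp (-(I * ξ * s y))) ∂μ) • ∫ x : ℝ, cexp (-(I * ξ * x)) • f x := by
  set F : α → ℝ → E := fun y x => cexp (-(I * ξ * x)) • (f x - f (x - s y))
  have hF_meas : StronglyMeasurable (Function.uncurry F) :=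
    (Continuous.stronglyMeasurable (f := fun p : ℝ × ℝ =>
      cexp (-(I * ξ * p.2)) • (f p.2 - f (p.2 - p.1))) (by fun_prop)).comp_measurable
      (hs.prodMap measurable_id)
  obtain ⟨K, hK⟩ := f.exists_integral_norm_sub_comp_sub_le
  have hF_int : Integrable (Function.uncurry F) (μ.prod volume) := by
    refine (integrable_prod_iff hF_meas.aestronglyMeasurable).2
      ⟨.of_forall fun y => ?_, (hμs.const_mul K).mono' ?_ (.of_forall fun y => ?_)⟩
    · exact (f.integrable.sub (f.integrable.comp_sub_right (s y))).cexp_smul ξ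
    · exact hF_meas.norm.integral_prod_right'.aestronglyMeasurable
    · rw [Real.norm_of_nonneg (integral_nonneg fun _ => norm_nonneg _)]
      simpa [F, norm_smul, norm_exp] using hK (s y)
  calc ∫ x : ℝ, cexp (-(I * ξ * x)) • ∫ y, (f x - f (x - s y)) ∂μ
      = ∫ x : ℝ, ∫ y, F y x ∂μ := by simp_rw [F, integral_smul]
    _ = ∫ y, (∫ x : ℝ, F y x) ∂μ := (integral_integral_swap hF_int).symm
    _ = ∫ y, (1 - cexp (-(I * ξ * s y))) • (∫ x : ℝ, cexp (-(I * ξ * x)) • f x) ∂μ :=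
        by simp_rw [F, f.integral_cexp_smul_sub_comp_sub]
    _ = _ := integral_smul_const _ _

end Fourier

/-- Fourier transforms of the left and right Marchaud-type derivatives of a Schwartz
function: `Φ(iξ) f̂(ξ)` and `Φ(−iξ) f̂(ξ)` respectively. -/
theorem fourier_marchaud_type
    (Lev : Measure ℝ)
    (hLev : IntegrableOn (fun z => min 1 z) (Ioi 0) Lev)
    (Φ : ℂ → ℂ)
    (hΦ : ∀ z : ℂ, 0 ≤ z.re →
      Φ z = ∫ y in Ioi (0:ℝ), (1 - Complex.exp (-(z * y))) ∂Lev)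
    (f : SchwartzMap ℝ ℂ) (ξ : ℝ) :
    (∫ x : ℝ, Complex.exp (-(Complex.I * ξ * x)) *
        (∫ y in Ioi (0:ℝ), (f x - f (x - y)) ∂Lev) =
      Φ (Complex.I * ξ) * ∫ x : ℝ, Complex.exp (-(Complex.I * ξ * x)) * f x) ∧
    (∫ x : ℝ, Complex.exp (-(Complex.I * ξ * x)) *
        (∫ y in Ioi (0:ℝ), (f x - f (x + y)) ∂Lev) =
      Φ (-(Complex.I * ξ)) * ∫ x : ℝ, Complex.exp (-(Complex.I * ξ * x)) * f x) := by
  have hpos : ∀ᵐ y ∂Lev.restrict (Ioi 0), 0 < y := ae_restrict_mem measurableSet_Ioi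
  have : SigmaFinite (Lev.restrict (Ioi 0)) :=
    hLev.sigmaFinite_of_ae_pos (hpos.mono fun y hy => lt_min one_pos hy)
  have hmin : Integrable (fun y => min 1 |y|) (Lev.restrict (Ioi 0)) :=
    hLev.congr (hpos.mono fun y hy => by simp only [abs_of_pos hy])
  constructor
  · rw [hΦ _ (by simp)]
    simpa using f.integral_cexp_smul_integral_sub_comp_sub measurable_id hmin ξ
  · rw [hΦ _ (by simp)]
    simpa using f.integral_cexp_smul_integral_sub_comp_sub measurable_neg
      (by simpa only [abs_neg] using hmin) ξ
end

section
/- For λ > 0 and x > 0, ∫₀^∞ e^{−λt} (x/t) g(t,x) dt = e^{−x√λ}, where g(t,x) = e^{−x²/(4t)}/√(4πt). -/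
/-!
Substitute `v = x / (2√t) - a√t` with `a = √l`. This maps `(0, ∞)` decreasingly onto `ℝ`, and with
`w = x / (2√t) + a√t` one has `v² + 2xa = w²`, `-dv/dt = w / (2t)` and `x / √t = w + v`.
Hence `e^{-lt} (x/t) g(t,x) dt = e^{-xa} π^{-1/2} e^{-v²} (1 + v / √(v² + 2xa)) dv`; the odd part
integrates to zero and the even part is a Gaussian integral equal to `√π`.
-/

open MeasureTheory Set Real

theorem integral_eq_zero_of_odd {E : Type*} [NormedAddCommGroup E] [NormedSpace ℝ E]
    {f : ℝ → E} (hf : ∀ v, f (-v) = -f v) : ∫ v, f v = 0 := by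
  have h : ∫ v, f v = -∫ v, f v :=
    calc ∫ v, f v = ∫ v, f (-v) := (integral_neg_eq_self f volume).symm
      _ = -∫ v, f v := by simp_rw [hf]; exact integral_neg f
  have h2 : (2 : ℝ) • ∫ v, f v = 0 := by rw [two_smul]; nth_rewrite 2 [h]; exact add_neg_cancel _
  simpa using h2

theorem integrable_exp_neg_sq_mul_div_sqrt_sq_add {c : ℝ} (hc : 0 ≤ c) :
    Integrable fun v : ℝ => exp (-v ^ 2) * (v / √(v ^ 2 + c)) := by
  refine (integrable_exp_neg_mul_sq one_pos).mono (by fun_prop) (ae_of_all _ fun v => ?_)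
  have hv : |v| ≤ √(v ^ 2 + c) := sqrt_sq_eq_abs v ▸ sqrt_le_sqrt (by linarith)
  rw [norm_mul, norm_div, norm_of_nonneg (sqrt_nonneg _), neg_one_mul]
  exact mul_le_of_le_one_right (norm_nonneg _) (div_le_one_of_le₀ hv (sqrt_nonneg _))

theorem integral_exp_neg_sq_mul_one_add_div_sqrt_sq_add {c : ℝ} (hc : 0 ≤ c) :
    ∫ v : ℝ, exp (-v ^ 2) * (1 + v / √(v ^ 2 + c)) = √π := by
  have hodd : ∫ v : ℝ, exp (-v ^ 2) * (v / √(v ^ 2 + c)) = 0 :=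
    integral_eq_zero_of_odd fun v => by simp [neg_div]
  simp_rw [mul_one_add]
  rw [integral_add _ (integrable_exp_neg_sq_mul_div_sqrt_sq_add hc), hodd, add_zero]
  · simpa using integral_gaussian 1
  · simpa using integrable_exp_neg_mul_sq one_pos

noncomputable def hittingSubst (x a t : ℝ) : ℝ := x / (2 * √t) - a * √t

section hittingSubst

variable {x a : ℝ}

theorem hittingSubst_sq {s : ℝ} (hs : 0 ≤ s) : hittingSubst x a (s ^ 2) = x / (2 * s) - a * s := by
  rw [hittingSubst, sqrt_sq hs]

theorem hasDerivAt_hittingSubst (x a : ℝ) {t : ℝ} (ht : 0 < t) :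
    HasDerivAt (hittingSubst x a) (-(x / (2 * √t) + a * √t) / (2 * t)) t := by
  have hst : 0 < √t := sqrt_pos.2 ht
  have hsqrt := hasDerivAt_sqrt ht.ne'
  have hφ : hittingSubst x a = fun u => x / 2 * (√u)⁻¹ - a * √u := by
    funext u; rw [hittingSubst]; ring
  rw [hφ]
  refine (((hsqrt.inv hst.ne').const_mul (x / 2)).sub (hsqrt.const_mul a)).congr_deriv ?_
  rw [sq_sqrt ht.le]; field_simp; rw [sq_sqrt ht.le]; ring

theorem strictAntiOn_hittingSubst (hx : 0 < x) (ha : 0 ≤ a) :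
    StrictAntiOn (hittingSubst x a) (Ioi 0) := by
  refine strictAntiOn_of_hasDerivWithinAt_neg (convex_Ioi 0)
    (f' := fun t => -(x / (2 * √t) + a * √t) / (2 * t))
    (fun t ht => (hasDerivAt_hittingSubst x a ht).continuousAt.continuousWithinAt)
    (fun t ht => ?_) (fun t ht => ?_) <;> rw [interior_Ioi] at ht
  · exact (hasDerivAt_hittingSubst x a ht).hasDerivWithinAt
  · have : 0 < √t := sqrt_pos.2 ht
    have : 0 < t := ht
    exact div_neg_of_neg_of_pos (neg_neg_of_pos (by positivity)) (by positivity)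

theorem hittingSubst_image_Ioi (hx : 0 < x) (ha : 0 < a) :
    hittingSubst x a '' Ioi 0 = univ := by
  refine eq_univ_of_forall fun v => ?_
  set r := √(v ^ 2 + 2 * (x * a))
  have hr : r ^ 2 = v ^ 2 + 2 * (x * a) := sq_sqrt (by positivity)
  have hvr : v < r := by nlinarith [sqrt_nonneg (v ^ 2 + 2 * (x * a))]
  -- `s` is the positive root of `2 a s² + 2 v s - x = 0`.
  set s := (r - v) / (2 * a)
  have hs : 0 < s := div_pos (by linarith) (by positivity)
  refine ⟨s ^ 2, mem_Ioi.2 (by positivity), ?_⟩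
  rw [hittingSubst_sq hs.le]
  have hrv : r - v ≠ 0 := by linarith
  simp only [s]
  field_simp
  linear_combination -hr

theorem abs_deriv_hittingSubst_mul (hx : 0 < x) (ha : 0 ≤ a) {t : ℝ} (ht : 0 < t) :
    |-(x / (2 * √t) + a * √t) / (2 * t)| *
      (exp (-(x * a)) / √π * (exp (-hittingSubst x a t ^ 2) *
        (1 + hittingSubst x a t / √(hittingSubst x a t ^ 2 + 2 * (x * a))))) =
      exp (-(a ^ 2 * t)) * ((x / t) * (exp (-(x ^ 2 / (4 * t))) / √(4 * π * t))) := by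
  obtain ⟨s, hs, rfl⟩ : ∃ s, 0 < s ∧ s ^ 2 = t := ⟨√t, sqrt_pos.2 ht, sq_sqrt ht.le⟩
  rw [sqrt_sq hs.le, hittingSubst_sq hs.le]
  have hw : √((x / (2 * s) - a * s) ^ 2 + 2 * (x * a)) = x / (2 * s) + a * s := by
    rw [show (x / (2 * s) - a * s) ^ 2 + 2 * (x * a) = (x / (2 * s) + a * s) ^ 2 by
      field_simp; ring,
      sqrt_sq (by positivity)]
  have hexp : exp (-(x * a)) * exp (-(x / (2 * s) - a * s) ^ 2) =
      exp (-(a ^ 2 * s ^ 2)) * exp (-(x ^ 2 / (4 * s ^ 2))) := by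
    rw [← exp_add, ← exp_add]; congr 1; field_simp; ring
  have hπ : √(4 * π * s ^ 2) = 2 * √π * s := by
    rw [show 4 * π * s ^ 2 = (2 * √π * s) ^ 2 by rw [mul_pow, mul_pow, sq_sqrt pi_pos.le]; ring,
      sqrt_sq (by positivity)]
  have hπ0 : 0 < √π := sqrt_pos.2 pi_pos
  have hw0 : 0 < x / (2 * s) + a * s := by positivity
  rw [hw, hπ, abs_div, abs_neg, abs_of_pos hw0, abs_of_pos (by positivity)]
  calc _ = exp (-(x * a)) * exp (-(x / (2 * s) - a * s) ^ 2) * ((x / (2 * s) + a * s) /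
          (2 * s ^ 2) * (1 + (x / (2 * s) - a * s) / (x / (2 * s) + a * s)) / √π) := by ring
    _ = _ := by rw [hexp]; field_simp; ring

end hittingSubst

/-- Laplace transform of the first-passage density `(x/t) g(t,x)`. -/
theorem laplace_hitting_density (l x : ℝ) (hl : 0 < l) (hx : 0 < x) :
    ∫ t in Ioi (0:ℝ),
      Real.exp (-(l * t)) * ((x / t) * (Real.exp (-(x ^ 2 / (4 * t))) / Real.sqrt (4 * π * t))) =
      Real.exp (-(x * Real.sqrt l)) := by
  set a := √l
  have ha : 0 < a := sqrt_pos.2 hl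
  have hcv := integral_image_eq_integral_abs_deriv_smul measurableSet_Ioi
    (fun t ht => (hasDerivAt_hittingSubst x a ht).hasDerivWithinAt)
    (strictAntiOn_hittingSubst hx ha.le).injOn
    (fun v => exp (-(x * a)) / √π * (exp (-v ^ 2) * (1 + v / √(v ^ 2 + 2 * (x * a)))))
  rw [hittingSubst_image_Ioi hx ha, setIntegral_univ, integral_const_mul,
    integral_exp_neg_sq_mul_one_add_div_sqrt_sq_add (by positivity),
    div_mul_cancel₀ _ (sqrt_pos.2 pi_pos).ne'] at hcv
  rw [hcv]
  refine setIntegral_congr_fun measurableSet_Ioi fun t ht => ?_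
  rw [smul_eq_mul, abs_deriv_hittingSubst_mul hx ha.le ht, sq_sqrt hl.le]
end
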